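/- arXiv:1312.5938 — 4 statements merged into one kernel-verified Lean document; each statement's English description precedes it below -/
import Mathlib

section
/- Let h_1, h_2 be i.i.d. Gamma(m, 1/m) random variables and a, b > 0, 0 < β < 1. Then E[(a h_1 + b h_2)^β] = a^β m^{-β} Γ(β + 2m) · ₂F₁(-β, m, 2m, 1 - b/a) / Γ(2m), where ₂F₁ is the Gauss hypergeometric function (the right side interpreted via the regularized hypergeometric function). -/
open MeasureTheory Real Set

/-- The regularized Gauss hypergeometric function `₂𝐅₁(a,b,c,z) = ₂F₁(a,b,c,z)/Γ(c)`,
given (for `c > b > 0` and `z < 1`) by Euler's integral representation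
`₂𝐅₁(a,b,c,z) = (1/(Γ(b)Γ(c-b))) ∫_0^1 t^{b-1}(1-t)^{c-b-1}(1-zt)^{-a} dt`. -/
noncomputable def reg2F1 (a b c z : ℝ) : ℝ :=
  (1 / (Real.Gamma b * Real.Gamma (c - b))) *
    ∫ t in Ioo (0 : ℝ) 1, t ^ (b - 1) * (1 - t) ^ (c - b - 1) * (1 - z * t) ^ (-a)

/-!
The substitution `x = s (1 - t)`, `y = s t` (inverse `s = x + y`, `t = y / (x + y)`, Jacobian `s`)
maps `(0, ∞) × (0, 1)` onto the open quadrant. Since `a x + b y = s (a (1 - t) + b t)` and the two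
Gamma densities multiply to `s ^ (2m - 2) e^{-ms}` times `t ^ (m - 1) (1 - t) ^ (m - 1)`, the
integrand separates: the `s`-integral is `m ^ (-β - 2m) Γ(β + 2m)`, and the `t`-integral is Euler's
integral for `₂F₁(-β, m; 2m; 1 - b/a)` once `a ^ β` is pulled out of `(a (1 - t) + b t) ^ β`.
Fubini applies because `(a x + b y) ^ β ≤ (a x) ^ β + (b y) ^ β` for `β ≤ 1`.
-/

noncomputable def gammaDensity (m x : ℝ) : ℝ :=
  m ^ m * x ^ (m - 1) * exp (-(m * x)) / Gamma m

lemma gammaDensity_nonneg {m x : ℝ} (hm : 0 < m) (hx : 0 ≤ x) : 0 ≤ gammaDensity m x := by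
  have := Gamma_pos_of_pos hm
  unfold gammaDensity
  positivity

lemma measurable_gammaDensity (m : ℝ) : Measurable (gammaDensity m) := by
  unfold gammaDensity
  fun_prop

lemma integrableOn_rpow_mul_gammaDensity {m β : ℝ} (hm : 0 < m) (hβ : -m < β) :
    IntegrableOn (fun x ↦ x ^ β * gammaDensity m x) (Ioi 0) := by
  have h : IntegrableOn (fun x ↦ m ^ m / Gamma m * (x ^ (β + m - 1) * exp (-m * x ^ (1 : ℝ))))
      (Ioi 0) :=
    (integrableOn_rpow_mul_exp_neg_mul_rpow (by linarith) one_pos hm).const_mul _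
  refine h.congr_fun (fun x (hx : 0 < x) ↦ ?_) measurableSet_Ioi
  dsimp only
  rw [gammaDensity, rpow_one, neg_mul, show β + m - 1 = β + (m - 1) by ring, rpow_add hx]
  ring

lemma integrableOn_gammaDensity {m : ℝ} (hm : 0 < m) : IntegrableOn (gammaDensity m) (Ioi 0) := by
  simpa using integrableOn_rpow_mul_gammaDensity hm (neg_lt_zero.2 hm)

lemma integrableOn_rpow_add_mul_mul {u v : ℝ → ℝ} {a b β : ℝ} (ha : 0 ≤ a) (hb : 0 ≤ b)
    (hβ0 : 0 ≤ β) (hβ1 : β ≤ 1) (hu_meas : Measurable u) (hv_meas : Measurable v)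
    (hu_nonneg : ∀ x, 0 < x → 0 ≤ u x) (hv_nonneg : ∀ y, 0 < y → 0 ≤ v y)
    (hu : IntegrableOn u (Ioi 0)) (hv : IntegrableOn v (Ioi 0))
    (hu' : IntegrableOn (fun x ↦ x ^ β * u x) (Ioi 0))
    (hv' : IntegrableOn (fun y ↦ y ^ β * v y) (Ioi 0)) :
    IntegrableOn (fun z : ℝ × ℝ ↦ (a * z.1 + b * z.2) ^ β * u z.1 * v z.2) (Ioi 0 ×ˢ Ioi 0) := by
  have hbound : IntegrableOn (fun z : ℝ × ℝ ↦
      a ^ β * (z.1 ^ β * u z.1 * v z.2) + b ^ β * (u z.1 * (z.2 ^ β * v z.2))) (Ioi 0 ×ˢ Ioi 0) := by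
    rw [IntegrableOn, Measure.volume_eq_prod, ← Measure.prod_restrict]
    exact ((hu'.mul_prod hv).const_mul _).add ((hu.mul_prod hv').const_mul _)
  refine hbound.mono' (by fun_prop) ?_
  filter_upwards [ae_restrict_mem (measurableSet_Ioi.prod measurableSet_Ioi)]
    with ⟨x, y⟩ ⟨hx, hy⟩
  have hx : 0 < x := hx
  have hy : 0 < y := hy
  have hux := hu_nonneg x hx
  have hvy := hv_nonneg y hy
  rw [norm_of_nonneg (by positivity)]
  calc (a * x + b * y) ^ β * u x * v y ≤ ((a * x) ^ β + (b * y) ^ β) * u x * v y := by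
        gcongr
        exact rpow_add_le_add_rpow (by positivity) (by positivity) hβ0 hβ1
    _ = _ := by rw [mul_rpow ha hx.le, mul_rpow hb hy.le]; ring

def betaSubst (p : ℝ × ℝ) : ℝ × ℝ := (p.1 * (1 - p.2), p.1 * p.2)

lemma betaSubst_image : betaSubst '' (Ioi 0 ×ˢ Ioo 0 1) = Ioi 0 ×ˢ Ioi 0 := by
  ext ⟨x, y⟩
  constructor
  · rintro ⟨⟨s, t⟩, ⟨hs, ht0, ht1⟩, h⟩
    simp only [betaSubst, Prod.mk.injEq] at h
    obtain ⟨rfl, rfl⟩ := h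
    exact ⟨mul_pos hs (sub_pos.2 ht1), mul_pos hs ht0⟩
  · rintro ⟨hx, hy⟩
    have hx : 0 < x := hx
    have hy : 0 < y := hy
    refine ⟨(x + y, y / (x + y)), ⟨show 0 < x + y by positivity, by positivity, ?_⟩, ?_⟩
    · exact (div_lt_one (by positivity)).2 (by linarith)
    · have hxy : x + y ≠ 0 := by positivity
      simp only [betaSubst, Prod.mk.injEq]
      constructor
      · field_simp; ring
      · field_simp

lemma injOn_betaSubst : InjOn betaSubst (Ioi 0 ×ˢ Ioo 0 1) := by
  rintro ⟨s, t⟩ ⟨hs, -⟩ ⟨s', t'⟩ - h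
  simp only [betaSubst, Prod.mk.injEq] at h
  have hss : s = s' := by linear_combination h.1 + h.2
  subst hss
  simp [mul_left_cancel₀ (ne_of_gt hs) h.2]

noncomputable def fderivBetaSubst (p : ℝ × ℝ) : ℝ × ℝ →L[ℝ] ℝ × ℝ :=
  (Matrix.toLin (.finTwoProd ℝ) (.finTwoProd ℝ) !![1 - p.2, -p.1; p.2, p.1]).toContinuousLinearMap

lemma hasFDerivAt_betaSubst (p : ℝ × ℝ) : HasFDerivAt betaSubst (fderivBetaSubst p) p := by
  unfold fderivBetaSubst
  rw [Matrix.toLin_finTwoProd_toContinuousLinearMap]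
  have h₁ := (hasFDerivAt_fst (𝕜 := ℝ) (E := ℝ) (F := ℝ) (p := p)).mul
    ((hasFDerivAt_const 1 p).sub hasFDerivAt_snd)
  have h₂ := (hasFDerivAt_fst (𝕜 := ℝ) (E := ℝ) (F := ℝ) (p := p)).mul hasFDerivAt_snd
  convert! h₁.prodMk h₂ using 2 <;> ext <;> simp [mul_comm]

lemma det_fderivBetaSubst (p : ℝ × ℝ) : (fderivBetaSubst p).det = p.1 := by
  simp only [fderivBetaSubst, LinearMap.det_toContinuousLinearMap, LinearMap.det_toLin,
    Matrix.det_fin_two_of]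
  ring

lemma setIntegral_Ioi_prod_Ioi_eq_betaSubst {E : Type*} [NormedAddCommGroup E]
    [NormedSpace ℝ E] (f : ℝ × ℝ → E) :
    ∫ z in Ioi 0 ×ˢ Ioi 0, f z = ∫ p in Ioi 0 ×ˢ Ioo 0 1, p.1 • f (betaSubst p) := by
  rw [← betaSubst_image, integral_image_eq_integral_abs_det_fderiv_smul volume
    (measurableSet_Ioi.prod measurableSet_Ioo)
    (fun p _ ↦ (hasFDerivAt_betaSubst p).hasFDerivWithinAt) injOn_betaSubst]
  refine setIntegral_congr_fun (measurableSet_Ioi.prod measurableSet_Ioo) fun p ⟨hp, _⟩ ↦ ?_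
  rw [det_fderivBetaSubst, abs_of_pos hp]

lemma mul_integrand_betaSubst {m a b β s t : ℝ} (ha : 0 ≤ a) (hb : 0 ≤ b) (hs : 0 < s)
    (ht0 : 0 < t) (ht1 : t < 1) :
    s * ((a * (s * (1 - t)) + b * (s * t)) ^ β * gammaDensity m (s * (1 - t)) *
        gammaDensity m (s * t)) =
      (m ^ m / Gamma m) ^ 2 * (s ^ (β + 2 * m - 1) * exp (-(m * s))) *
        ((a * (1 - t) + b * t) ^ β * (t ^ (m - 1) * (1 - t) ^ (m - 1))) := by
  have h1t : 0 < 1 - t := sub_pos.2 ht1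
  have hexp : exp (-(m * (s * (1 - t)))) * exp (-(m * (s * t))) = exp (-(m * s)) := by
    rw [← exp_add]; ring_nf
  have hpow : s * (s ^ β * s ^ (m - 1) * s ^ (m - 1)) = s ^ (β + 2 * m - 1) := by
    rw [show β + 2 * m - 1 = β + (m - 1) + (m - 1) + 1 by ring, rpow_add_one hs.ne',
      rpow_add hs, rpow_add hs]
    ring
  rw [show a * (s * (1 - t)) + b * (s * t) = s * (a * (1 - t) + b * t) by ring,
    mul_rpow hs.le (by positivity), gammaDensity, gammaDensity, mul_rpow hs.le h1t.le,
    mul_rpow hs.le ht0.le, ← hexp, ← hpow]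
  ring

lemma integral_rpow_affine_mul_eq_reg2F1 {m a b β : ℝ} (hm : 0 < m) (ha : 0 < a) (hb : 0 ≤ b) :
    ∫ t in Ioo 0 1, (a * (1 - t) + b * t) ^ β * (t ^ (m - 1) * (1 - t) ^ (m - 1)) =
      a ^ β * Gamma m ^ 2 * reg2F1 (-β) m (2 * m) (1 - b / a) := by
  have hΓ := (Gamma_pos_of_pos hm).ne'
  rw [reg2F1, show 2 * m - m = m by ring, neg_neg, ← mul_assoc, ← integral_const_mul]
  refine setIntegral_congr_fun measurableSet_Ioo fun t ⟨ht0, ht1⟩ ↦ ?_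
  have hz : a * (1 - (1 - b / a) * t) = a * (1 - t) + b * t := by field_simp; ring
  have hz_nonneg : 0 ≤ 1 - (1 - b / a) * t := by
    rw [← mul_le_mul_iff_of_pos_left ha, mul_zero, hz]
    nlinarith
  rw [← hz, mul_rpow ha.le hz_nonneg]
  field_simp

/-- For i.i.d. Gamma(m, 1/m) variables `h₁, h₂` and `a, b > 0`, `β ∈ (0,1)`,
`E[(a h₁ + b h₂)^β] = a^β m^{-β} Γ(β + 2m) ₂𝐅₁(-β, m, 2m, 1 - b/a)`. -/
theorem stmt8 (m a b β : ℝ) (hm : 0 < m) (ha : 0 < a) (hb : 0 < b)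
    (hβ0 : 0 < β) (hβ1 : β < 1) :
    ∫ x in Ioi (0 : ℝ), ∫ y in Ioi (0 : ℝ),
        (a * x + b * y) ^ β
          * (m ^ m * x ^ (m - 1) * Real.exp (-(m * x)) / Real.Gamma m)
          * (m ^ m * y ^ (m - 1) * Real.exp (-(m * y)) / Real.Gamma m)
      = a ^ β * m ^ (-β) * Real.Gamma (β + 2 * m) * reg2F1 (-β) m (2 * m) (1 - b / a) := by
  have hDβ := integrableOn_rpow_mul_gammaDensity hm (by linarith : -m < β)
  have hint := integrableOn_rpow_add_mul_mul ha.le hb.le hβ0.le hβ1.le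
    (measurable_gammaDensity m) (measurable_gammaDensity m)
    (fun x hx ↦ gammaDensity_nonneg hm hx.le) (fun x hx ↦ gammaDensity_nonneg hm hx.le)
    (integrableOn_gammaDensity hm) (integrableOn_gammaDensity hm) hDβ hDβ
  have hm_pow : (m ^ m / Gamma m) ^ 2 * (1 / m) ^ (β + 2 * m) * Gamma m ^ 2 = m ^ (-β) := by
    have hΓ := (Gamma_pos_of_pos hm).ne'
    have h : (m ^ m) ^ 2 * m ^ (-(β + 2 * m)) = m ^ (-β) := by
      rw [← rpow_two, ← rpow_mul hm.le, ← rpow_add hm]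
      ring_nf
    rw [one_div, inv_rpow hm.le, ← rpow_neg hm.le, ← h]
    field_simp
  change ∫ x in Ioi 0, ∫ y in Ioi 0, (a * x + b * y) ^ β * gammaDensity m x * gammaDensity m y = _
  rw [← setIntegral_prod _ hint, ← Measure.volume_eq_prod, setIntegral_Ioi_prod_Ioi_eq_betaSubst,
    setIntegral_congr_fun (measurableSet_Ioi.prod measurableSet_Ioo)
      fun p ⟨hs, ht0, ht1⟩ ↦ mul_integrand_betaSubst ha.le hb.le hs ht0 ht1,
    Measure.volume_eq_prod, ← Measure.prod_restrict,
    integral_prod_mul (fun s ↦ (m ^ m / Gamma m) ^ 2 * (s ^ (β + 2 * m - 1) * exp (-(m * s))))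
      (fun t ↦ (a * (1 - t) + b * t) ^ β * (t ^ (m - 1) * (1 - t) ^ (m - 1))),
    integral_const_mul,
    integral_rpow_mul_exp_neg_mul_Ioi (by linarith) hm,
    integral_rpow_affine_mul_eq_reg2F1 hm ha hb.le, ← hm_pow]
  ring
end

section
/- Faà di Bruno's formula for an exponential outer function: for a smooth real function g, d^n/dx^n e^{g(x)} = e^{g(x)} B_n(g'(x), g''(x), ..., g^{(n)}(x)), where B_n is the n-th complete Bell polynomial. -/
/-! Since `(exp ∘ g)' = g' · (exp ∘ g)`, Leibniz's rule applied to this product expresses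
`(exp ∘ g)^(n+1)` through `g^(k+1)` and `(exp ∘ g)^(n-k)`, which is exactly the recurrence
defining the complete Bell polynomials; strong induction on `n` finishes. -/

open Real Finset

/-- The `n`-th complete Bell polynomial `B_n(x₁, x₂, …)`, defined via the standard
recurrence `B_0 = 1`, `B_{n+1}(x) = ∑_{k=0}^{n} C(n,k) x_{k+1} B_{n-k}(x)`, which is
equivalent to the exponential generating-function definition
`exp(∑_{j≥1} x_j t^j/j!) = ∑_{n≥0} B_n(x) t^n/n!`. -/
noncomputable def completeBell : ℕ → (ℕ → ℝ) → ℝ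
  | 0, _ => 1
  | (n + 1), x =>
      ∑ k ∈ Finset.range (n + 1), (n.choose k : ℝ) * x (k + 1) * completeBell (n - k) x
  decreasing_by exact Nat.lt_succ_of_le (Nat.sub_le n k)

theorem deriv_exp_comp_eq_mul {g : ℝ → ℝ} (hg : Differentiable ℝ g) :
    deriv (fun y => exp (g y)) = fun y => deriv g y * exp (g y) := by
  funext y
  rw [deriv_exp (hg y), mul_comm]

theorem iteratedDeriv_succ_exp_comp {g : ℝ → ℝ} {n : ℕ} (hg : ContDiff ℝ (n + 1) g) (x : ℝ) :
    iteratedDeriv (n + 1) (fun y => exp (g y)) x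
      = ∑ k ∈ range (n + 1), (n.choose k : ℝ) * iteratedDeriv (k + 1) g x
          * iteratedDeriv (n - k) (fun y => exp (g y)) x := by
  have hg' : ContDiff ℝ n (deriv g) := (contDiff_succ_iff_deriv.mp hg).2.2
  have hexp : ContDiff ℝ n (fun y => exp (g y)) := contDiff_exp.comp (hg.of_le (by simp))
  rw [iteratedDeriv_succ', deriv_exp_comp_eq_mul (hg.differentiable (by simp)),
    iteratedDeriv_fun_mul hg'.contDiffAt hexp.contDiffAt]
  simp only [← iteratedDeriv_succ']

/-- Faà di Bruno's formula with exponential outer function: for an `n`-times continuously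
differentiable `g : ℝ → ℝ`,
`d^n/dx^n e^{g(x)} = e^{g(x)} B_n(g'(x), …, g^{(n)}(x))`. -/
theorem stmt12 (g : ℝ → ℝ) (n : ℕ) (hg : ContDiff ℝ n g) (x : ℝ) :
    iteratedDeriv n (fun y => Real.exp (g y)) x
      = Real.exp (g x) * completeBell n (fun j => iteratedDeriv j g x) := by
  induction n using Nat.strong_induction_on with
  | _ n ih =>
    cases n with
    | zero => simp [completeBell]
    | succ n =>
      rw [iteratedDeriv_succ_exp_comp (by exact_mod_cast hg), completeBell, mul_sum]
      refine sum_congr rfl fun k _ => ?_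
      have hkn : n - k < n + 1 := by omega
      rw [ih (n - k) hkn (hg.of_le (by exact_mod_cast hkn.le))]
      ring
end

section
/- Let g_1,...,g_N ≥ 0 be i.i.d. random variables and I_1,...,I_N positive, identically distributed random variables independent of the g's with E[I_1^{-1}] < ∞. Then E[Σ_n g_n/I_n] / E[max_n g_n/I_n] ≤ N·E[g_1]/E[max_n g_n]; i.e., the MRC-over-SC mean-SINR gain under random interference is at most the interference-free gain N E[g]/E[max g_n]. -/
open MeasureTheory ProbabilityTheory Finset

/-!
Fix the gains `x = (g_n)` and let `m` be an index where `x` is maximal. Then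
`max_n x_n / I_n ≥ x_m / I_m`, whose expectation over the interference is `(max_n x_n) E[1/I_1]`,
because all `I_n` share the law of `I_1`. As the interference is independent of the gains,
Fubini turns this into `E[max_n g_n/I_n] ≥ E[max_n g_n] E[1/I_1]`, while independence also gives
`E[∑_n g_n/I_n] = N E[g_1] E[1/I_1]`; the factor `E[1/I_1] > 0` cancels in the ratio.
-/

theorem Finset.measurable_sup'_apply {ι δ β : Type*} [MeasurableSpace δ] [SemilatticeSup β]
    [MeasurableSpace β] [MeasurableSup₂ β] {s : Finset ι} (hs : s.Nonempty) {f : ι → δ → β}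
    (hf : ∀ n ∈ s, Measurable (f n)) : Measurable fun x => s.sup' hs fun n => f n x := by
  simpa only [← Finset.sup'_apply] using Finset.measurable_sup' hs hf

theorem Finset.integrable_sup'_apply {ι α : Type*} [MeasurableSpace α] {μ : Measure α}
    {s : Finset ι} (hs : s.Nonempty) {f : ι → α → ℝ} (hf : ∀ n ∈ s, Integrable (f n) μ) :
    Integrable (fun x => s.sup' hs fun n => f n x) μ := by
  simpa only [← Finset.sup'_apply] using
    Finset.sup'_induction hs f (p := (Integrable · μ)) (fun _ h₁ _ h₂ => h₁.sup h₂) hf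

theorem integral_pos_of_forall_pos {α : Type*} [MeasurableSpace α] {μ : Measure α} [NeZero μ]
    {f : α → ℝ} (hf : ∀ x, 0 < f x) (hfi : Integrable f μ) : 0 < ∫ x, f x ∂μ := by
  rw [integral_pos_iff_support_of_nonneg (fun x => (hf x).le) hfi,
    Function.support_eq_univ fun x => (hf x).ne']
  simp [NeZero.ne μ]

section Ratio

variable {Ω : Type*} [MeasurableSpace Ω] {μ : Measure Ω} {X Y : Ω → ℝ}

theorem ProbabilityTheory.IndepFun.integrable_div (hXY : IndepFun X Y μ) (hX : Integrable X μ)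
    (hY : Integrable (fun ω => (Y ω)⁻¹) μ) : Integrable (fun ω => X ω / Y ω) μ := by
  simp_rw [div_eq_mul_inv]
  exact (hXY.comp measurable_id measurable_inv).integrable_mul hX hY

theorem ProbabilityTheory.IndepFun.integral_div (hXY : IndepFun X Y μ)
    (hX : AEStronglyMeasurable X μ) (hY : AEStronglyMeasurable (fun ω => (Y ω)⁻¹) μ) :
    ∫ ω, X ω / Y ω ∂μ = (∫ ω, X ω ∂μ) * ∫ ω, (Y ω)⁻¹ ∂μ := by
  simp_rw [div_eq_mul_inv]
  exact (hXY.comp measurable_id measurable_inv).integral_fun_mul_eq_mul_integral hX hY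

theorem integrable_div_of_identDistrib {ι : Type*} {g I : ι → Ω → ℝ} {i₀ : ι}
    (hg : ∀ i, IdentDistrib (g i) (g i₀) μ μ) (hI : ∀ i, IdentDistrib (I i) (I i₀) μ μ)
    (hgI : ∀ i, IndepFun (g i) (I i) μ) (hg₀ : Integrable (g i₀) μ)
    (hI₀ : Integrable (fun ω => (I i₀ ω)⁻¹) μ) (i : ι) :
    Integrable (fun ω => g i ω / I i ω) μ :=
  (hgI i).integrable_div ((hg i).integrable_iff.2 hg₀)
    (((hI i).comp measurable_inv).integrable_iff.2 hI₀)

theorem integral_sum_div_of_identDistrib {ι : Type*} [Fintype ι] {g I : ι → Ω → ℝ} {i₀ : ι}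
    (hg : ∀ i, IdentDistrib (g i) (g i₀) μ μ) (hI : ∀ i, IdentDistrib (I i) (I i₀) μ μ)
    (hgI : ∀ i, IndepFun (g i) (I i) μ) (hg₀ : Integrable (g i₀) μ)
    (hI₀ : Integrable (fun ω => (I i₀ ω)⁻¹) μ) :
    ∫ ω, ∑ i, g i ω / I i ω ∂μ =
      Fintype.card ι * (∫ ω, g i₀ ω ∂μ) * ∫ ω, (I i₀ ω)⁻¹ ∂μ := by
  have hratio (i : ι) : ∫ ω, g i ω / I i ω ∂μ = (∫ ω, g i₀ ω ∂μ) * ∫ ω, (I i₀ ω)⁻¹ ∂μ := by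
    have hIinv := (hI i).comp measurable_inv
    rw [(hgI i).integral_div (hg i).aemeasurable_fst.aestronglyMeasurable
      hIinv.aemeasurable_fst.aestronglyMeasurable, (hg i).integral_eq]
    exact congrArg _ hIinv.integral_eq
  rw [integral_finsetSum _ fun i _ => integrable_div_of_identDistrib hg hI hgI hg₀ hI₀ i]
  simp only [hratio, sum_const, card_univ, nsmul_eq_mul, mul_assoc]

end Ratio

section MaxOfRatios

variable {ι : Type*} [Fintype ι] [Nonempty ι] {k : ℝ}

theorem sup'_mul_le_integral_sup'_div {ν : Measure (ι → ℝ)} (x : ι → ℝ)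
    (hinv : ∀ m, Integrable (fun y : ι → ℝ => (y m)⁻¹) ν) (hk : ∀ m, ∫ y, (y m)⁻¹ ∂ν = k)
    (hint : Integrable (fun y => univ.sup' univ_nonempty fun n => x n / y n) ν) :
    univ.sup' univ_nonempty x * k ≤ ∫ y, univ.sup' univ_nonempty (fun n => x n / y n) ∂ν := by
  obtain ⟨m, -, hm⟩ := exists_mem_eq_sup' univ_nonempty x
  calc univ.sup' univ_nonempty x * k = ∫ y, x m * (y m)⁻¹ ∂ν := by
        rw [hm, integral_const_mul, hk]
    _ ≤ _ := integral_mono ((hinv m).const_mul _) hint fun y =>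
        le_sup' (fun n => x n / y n) (mem_univ m)

theorem integral_sup'_mul_le_integral_prod_sup'_div {μ ν : Measure (ι → ℝ)} [SFinite μ] [SFinite ν]
    (hinv : ∀ m, Integrable (fun y : ι → ℝ => (y m)⁻¹) ν) (hk : ∀ m, ∫ y, (y m)⁻¹ ∂ν = k)
    (hmax : Integrable (fun x : ι → ℝ => univ.sup' univ_nonempty x) μ)
    (hint : Integrable (fun p : (ι → ℝ) × (ι → ℝ) => univ.sup' univ_nonempty fun n => p.1 n / p.2 n)
      (μ.prod ν)) :
    (∫ x, univ.sup' univ_nonempty x ∂μ) * k ≤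
      ∫ p, univ.sup' univ_nonempty (fun n => p.1 n / p.2 n) ∂(μ.prod ν) := by
  rw [integral_prod _ hint, ← integral_mul_const]
  refine integral_mono_ae (hmax.mul_const k) hint.integral_prod_left ?_
  filter_upwards [hint.prod_right_ae] with x hx
  exact sup'_mul_le_integral_sup'_div x hinv hk hx

theorem ProbabilityTheory.IndepFun.integral_sup'_mul_le_integral_sup'_div {Ω : Type*}
    [MeasurableSpace Ω] {μ : Measure Ω} [IsFiniteMeasure μ] {X Y : Ω → ι → ℝ}
    (hXY : IndepFun X Y μ) (hX : Measurable X) (hY : Measurable Y)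
    (hinv : ∀ m, Integrable (fun ω => (Y ω m)⁻¹) μ) (hk : ∀ m, ∫ ω, (Y ω m)⁻¹ ∂μ = k)
    (hmax : Integrable (fun ω => univ.sup' univ_nonempty (X ω)) μ)
    (hint : Integrable (fun ω => univ.sup' univ_nonempty fun n => X ω n / Y ω n) μ) :
    (∫ ω, univ.sup' univ_nonempty (X ω) ∂μ) * k ≤
      ∫ ω, univ.sup' univ_nonempty (fun n => X ω n / Y ω n) ∂μ := by
  have hXYm : Measurable fun ω => (X ω, Y ω) := hX.prodMk hY
  have hsup : Measurable fun x : ι → ℝ => univ.sup' univ_nonempty x :=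
    Finset.measurable_sup'_apply univ_nonempty fun n _ => measurable_pi_apply n
  have hF : Measurable fun p : (ι → ℝ) × (ι → ℝ) =>
      univ.sup' univ_nonempty fun n => p.1 n / p.2 n :=
    Finset.measurable_sup'_apply univ_nonempty fun n _ =>
      ((measurable_pi_apply n).comp measurable_fst).div
        ((measurable_pi_apply n).comp measurable_snd)
  have hinvm (m : ι) : Measurable fun y : ι → ℝ => (y m)⁻¹ := (measurable_pi_apply m).inv
  have hmap : μ.map (fun ω => (X ω, Y ω)) = (μ.map X).prod (μ.map Y) :=
    (indepFun_iff_map_prod_eq_prod_map_map hX.aemeasurable hY.aemeasurable).1 hXY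
  rw [← integral_map hX.aemeasurable hsup.aestronglyMeasurable,
    ← integral_map hXYm.aemeasurable hF.aestronglyMeasurable, hmap]
  refine integral_sup'_mul_le_integral_prod_sup'_div (fun m => ?_) (fun m => ?_) ?_ ?_
  · exact (integrable_map_measure (hinvm m).aestronglyMeasurable hY.aemeasurable).2 (hinv m)
  · rw [integral_map hY.aemeasurable (hinvm m).aestronglyMeasurable]
    exact hk m
  · exact (integrable_map_measure hsup.aestronglyMeasurable hX.aemeasurable).2 hmax
  · rw [← hmap]
    exact (integrable_map_measure hF.aestronglyMeasurable hXYm.aemeasurable).2 hint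

end MaxOfRatios

theorem mul_mul_div_le_mul_div {n b c d k : ℝ} (hn : 0 ≤ n) (hb : 0 ≤ b) (hbc : b ≤ c)
    (hk : 0 < k) (hcd : c * k ≤ d) : n * b * k / d ≤ n * b / c := by
  rcases (hb.trans hbc).eq_or_lt with hc | hc
  · simp [le_antisymm (hc ▸ hbc) hb]
  calc n * b * k / d ≤ n * b * k / (c * k) :=
        div_le_div_of_nonneg_left (by positivity) (by positivity) hcd
    _ = n * b / c := mul_div_mul_right _ _ hk.ne'

theorem stmt15_general {Ω : Type*} [MeasureSpace Ω] [IsProbabilityMeasure (ℙ : Measure Ω)]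
    (N : ℕ) [NeZero N] (g I : Fin N → Ω → ℝ)
    (hgmeas : ∀ i, Measurable (g i)) (hImeas : ∀ i, Measurable (I i))
    (hgpos : ∀ i ω, 0 ≤ g i ω) (hIpos : ∀ i ω, 0 < I i ω)
    (hgid : ∀ i, Measure.map (g i) ℙ = Measure.map (g 0) ℙ)
    (hIid : ∀ i, Measure.map (I i) ℙ = Measure.map (I 0) ℙ)
    (hindep : IndepFun (fun ω => fun i => g i ω) (fun ω => fun i => I i ω) ℙ)
    (hIinv : Integrable (fun ω => (I 0 ω)⁻¹) (ℙ : Measure Ω))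
    (hmaxgint : Integrable (fun ω => Finset.univ.sup' (Finset.univ_nonempty) fun i => g i ω)
      (ℙ : Measure Ω)) :
    (∫ ω, ∑ i, g i ω / I i ω) / (∫ ω, Finset.univ.sup' (Finset.univ_nonempty) fun i => g i ω / I i ω)
      ≤ (N : ℝ) * (∫ ω, g 0 ω) / ∫ ω, Finset.univ.sup' (Finset.univ_nonempty) fun i => g i ω := by
  have hg_le_max (i : Fin N) (ω : Ω) : g i ω ≤ univ.sup' univ_nonempty fun n => g n ω :=
    le_sup' (fun n => g n ω) (mem_univ i)
  have hg_int : Integrable (g 0) :=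
    hmaxgint.mono' (hgmeas 0).aestronglyMeasurable <| ae_of_all _ fun ω => by
      simpa only [Real.norm_of_nonneg (hgpos 0 ω)] using hg_le_max 0 ω
  have hg_id (i : Fin N) : IdentDistrib (g i) (g 0) :=
    ⟨(hgmeas i).aemeasurable, (hgmeas 0).aemeasurable, hgid i⟩
  have hI_id (i : Fin N) : IdentDistrib (I i) (I 0) :=
    ⟨(hImeas i).aemeasurable, (hImeas 0).aemeasurable, hIid i⟩
  have hpair (i : Fin N) : IndepFun (g i) (I i) :=
    hindep.comp (measurable_pi_apply i) (measurable_pi_apply i)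
  have hden := hindep.integral_sup'_mul_le_integral_sup'_div (measurable_pi_lambda _ hgmeas)
    (measurable_pi_lambda _ hImeas)
    (fun m => ((hI_id m).comp measurable_inv).integrable_iff.2 hIinv)
    (fun m => ((hI_id m).comp measurable_inv).integral_eq) hmaxgint
    (Finset.integrable_sup'_apply _ fun i _ =>
      integrable_div_of_identDistrib hg_id hI_id hpair hg_int hIinv i)
  have hk : 0 < ∫ ω, (I 0 ω)⁻¹ := integral_pos_of_forall_pos (fun ω => inv_pos.2 (hIpos 0 ω)) hIinv
  rw [integral_sum_div_of_identDistrib hg_id hI_id hpair hg_int hIinv, Fintype.card_fin]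
  exact mul_mul_div_le_mul_div N.cast_nonneg (integral_nonneg (hgpos 0))
    (integral_mono hg_int hmaxgint (hg_le_max 0)) hk hden

/-- MRC-over-SC mean-SINR gain bound: for i.i.d. nonnegative `g 1, …, g N` and positive,
identically distributed `I 1, …, I N` (not necessarily independent of each other)
independent of the `g`'s, with all relevant expectations finite,
`E[∑_n g_n/I_n] / E[max_n g_n/I_n] ≤ N E[g₁] / E[max_n g_n]`. -/
theorem stmt15 {Ω : Type*} [MeasureSpace Ω] [IsProbabilityMeasure (ℙ : Measure Ω)]
    (N : ℕ) [NeZero N] (hN : 1 ≤ N) (g I : Fin N → Ω → ℝ)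
    (hgmeas : ∀ i, Measurable (g i)) (hImeas : ∀ i, Measurable (I i))
    (hgpos : ∀ i ω, 0 ≤ g i ω) (hIpos : ∀ i ω, 0 < I i ω)
    (hgiid : iIndepFun g ℙ)
    (hgid : ∀ i, Measure.map (g i) ℙ = Measure.map (g 0) ℙ)
    (hIid : ∀ i, Measure.map (I i) ℙ = Measure.map (I 0) ℙ)
    (hindep : IndepFun (fun ω => fun i => g i ω) (fun ω => fun i => I i ω) ℙ)
    (hIinv : Integrable (fun ω => (I 0 ω)⁻¹) (ℙ : Measure Ω))
    (hsum : Integrable (fun ω => ∑ i, g i ω / I i ω) (ℙ : Measure Ω))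
    (hmaxint : Integrable (fun ω => Finset.univ.sup' (Finset.univ_nonempty) fun i => g i ω / I i ω)
      (ℙ : Measure Ω))
    (hmaxgint : Integrable (fun ω => Finset.univ.sup' (Finset.univ_nonempty) fun i => g i ω)
      (ℙ : Measure Ω)) :
    (∫ ω, ∑ i, g i ω / I i ω) / (∫ ω, Finset.univ.sup' (Finset.univ_nonempty) fun i => g i ω / I i ω)
      ≤ (N : ℝ) * (∫ ω, g 0 ω) / ∫ ω, Finset.univ.sup' (Finset.univ_nonempty) fun i => g i ω :=
  stmt15_general N g I hgmeas hImeas hgpos hIpos hgid hIid hindep hIinv hmaxgint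
end

section
/- The constant C_0 for α = 4 and m_D = m_I = 1 evaluates in closed form: ∫_0^1 u^{-1/2}( ₂F₁(1/2, 1, 3, (2u-1)/u)/Γ(3) ) du = 2 + 2^{-3/2} log(6 - 4√2) - 2^{-1/2} log(2 + √2), where the integrand uses the regularized Gauss hypergeometric function ₂𝐅₁(-2/α + m_D, m_I, 2m_I + m_D, (2u-1)/u) with the stated parameters. -/
open MeasureTheory Real Set

lemma rpow_neg_one_half_eq_inv_sqrt {x : ℝ} (hx : 0 ≤ x) : x ^ (-(1 : ℝ) / 2) = (√x)⁻¹ := by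
  rw [neg_div, rpow_neg hx, sqrt_eq_rpow, one_div]

lemma setIntegral_Ioo_eq_intervalIntegral (f : ℝ → ℝ) {a b : ℝ} (hab : a ≤ b) :
    ∫ t in Ioo a b, f t = ∫ t in a..b, f t := by
  rw [intervalIntegral.integral_of_le hab, integral_Ioc_eq_integral_Ioo]

lemma reg2F1_one_three (a z : ℝ) :
    reg2F1 a 1 3 z = ∫ t in Ioo (0 : ℝ) 1, (1 - t) * (1 - z * t) ^ (-a) := by
  norm_num [reg2F1]

lemma mul_one_sub_add_mul_pos {a b t : ℝ} (ha : 0 < a) (hb : 0 < b) (ht : t ∈ Icc (0 : ℝ) 1) :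
    0 < a * (1 - t) + b * t := by
  rcases ht.1.eq_or_lt with rfl | ht0
  · simpa using ha
  · nlinarith [ht.2]

lemma integral_one_sub_div_sqrt {a b : ℝ} (ha : 0 < a) (hb : 0 < b) (hab : a ≠ b) :
    ∫ t in (0 : ℝ)..1, (1 - t) / √(a * (1 - t) + b * t) = 2 / 3 * (√a + 2 * √b) / (√a + √b) ^ 2 := by
  set w : ℝ → ℝ := fun t ↦ √(a * (1 - t) + b * t)
  -- the primitive comes from the substitution `w² = a (1 - t) + b t`, which needs `a ≠ b`
  have hba : b - a ≠ 0 := sub_ne_zero.2 hab.symm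
  have hderiv : ∀ t ∈ uIcc (0 : ℝ) 1,
      HasDerivAt (fun t ↦ (2 * b * w t - 2 / 3 * w t ^ 3) / (b - a) ^ 2) ((1 - t) / w t) t := by
    intro t ht
    rw [uIcc_of_le zero_le_one] at ht
    have hL := mul_one_sub_add_mul_pos ha hb ht
    have hw : HasDerivAt w ((b - a) / (2 * w t)) t := by
      have hlin : HasDerivAt (fun t ↦ a * (1 - t) + b * t) (b - a) t :=
        ((((hasDerivAt_id' t).const_sub 1).const_mul a).fun_add
          ((hasDerivAt_id' t).const_mul b)).congr_deriv (by ring)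
      exact (hlin.sqrt hL.ne').congr_deriv rfl
    have hw2 : w t ^ 2 = a * (1 - t) + b * t := sq_sqrt hL.le
    have hwpos : 0 < w t := sqrt_pos.2 hL
    refine (((hw.const_mul (2 * b)).fun_sub ((hw.fun_pow 3).const_mul (2 / 3))).div_const
      ((b - a) ^ 2)).congr_deriv ?_
    field_simp
    norm_num
    linear_combination (-3) * hw2
  have hcont : ContinuousOn (fun t ↦ (1 - t) / w t) (uIcc 0 1) := by
    rw [uIcc_of_le zero_le_one]
    exact ContinuousOn.div (by fun_prop) (by fun_prop)
      fun t ht ↦ (sqrt_pos.2 (mul_one_sub_add_mul_pos ha hb ht)).ne'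
  rw [intervalIntegral.integral_eq_sub_of_hasDerivAt hderiv hcont.intervalIntegrable]
  have hw0 : w 0 = √a := by simp [w]
  have hw1 : w 1 = √b := by simp [w]
  rw [hw0, hw1]
  obtain ⟨p, hp, rfl⟩ : ∃ p, 0 < p ∧ a = p ^ 2 := ⟨√a, sqrt_pos.2 ha, (sq_sqrt ha.le).symm⟩
  obtain ⟨q, hq, rfl⟩ : ∃ q, 0 < q ∧ b = q ^ 2 := ⟨√b, sqrt_pos.2 hb, (sq_sqrt hb.le).symm⟩
  have hqp : q - p ≠ 0 := sub_ne_zero.2 fun h ↦ hab (by rw [h])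
  rw [sqrt_sq hp.le, sqrt_sq hq.le]
  field_simp
  ring

lemma rpow_neg_one_half_mul_reg2F1 {u : ℝ} (hu : u ∈ Ioo (0 : ℝ) 1) :
    u ^ (-(1 : ℝ) / 2) * reg2F1 (1 / 2) 1 3 ((2 * u - 1) / u)
      = ∫ t in Ioo (0 : ℝ) 1, (1 - t) / √(u * (1 - t) + (1 - u) * t) := by
  obtain ⟨hu0, hu1⟩ := hu
  rw [reg2F1_one_three, ← integral_const_mul]
  refine setIntegral_congr_fun measurableSet_Ioo fun t ht ↦ ?_
  have hL : 0 ≤ u * (1 - t) + (1 - u) * t :=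
    (mul_one_sub_add_mul_pos hu0 (sub_pos.2 hu1) (Ioo_subset_Icc_self ht)).le
  have hbase : 1 - (2 * u - 1) / u * t = (u * (1 - t) + (1 - u) * t) / u := by
    field_simp
    ring
  have hsplit : u ^ (-(1 : ℝ) / 2) * (1 - (2 * u - 1) / u * t) ^ (-(1 / 2 : ℝ))
      = (u * (1 - t) + (1 - u) * t) ^ (-(1 : ℝ) / 2) := by
    rw [hbase, neg_div, ← mul_rpow hu0.le (div_nonneg hL hu0.le), mul_div_cancel₀ _ hu0.ne']
  rw [mul_left_comm, hsplit, rpow_neg_one_half_eq_inv_sqrt hL, div_eq_mul_inv]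

noncomputable def c0Primitive (u : ℝ) : ℝ :=
  2 / 3 * (2 * √u - √(1 - u)) + 1 / 3 / (√u + √(1 - u))
    - √2 / 2 * (log (√2 + √u - √(1 - u)) - log (√u + √(1 - u)))

lemma sqrt_add_sqrt_one_sub_pos (u : ℝ) : 0 < √u + √(1 - u) := by
  rcases le_or_gt u 0 with h | h
  · have := sqrt_pos.2 (by linarith : 0 < 1 - u)
    positivity
  · have := sqrt_pos.2 h
    positivity

lemma c0Primitive_one_sub_zero :
    c0Primitive 1 - c0Primitive 0
      = 2 + (2 : ℝ) ^ (-(3 : ℝ) / 2) * log (6 - 4 * √2) - (2 : ℝ) ^ (-(1 : ℝ) / 2) * log (2 + √2) := by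
  have hq2 : √2 ^ 2 = 2 := sq_sqrt zero_le_two
  have hq1 : 1 < √2 := by nlinarith [sqrt_nonneg 2]
  have hhalf : (2 : ℝ) ^ (-(1 : ℝ) / 2) = (√2)⁻¹ := rpow_neg_one_half_eq_inv_sqrt zero_le_two
  have hthreehalves : (2 : ℝ) ^ (-(3 : ℝ) / 2) = (√2)⁻¹ / 2 := by
    rw [show -(3 : ℝ) / 2 = -(1 : ℝ) / 2 + (-1) by norm_num, rpow_add zero_lt_two, hhalf,
      rpow_neg_one, div_eq_mul_inv]
  have hlog₁ : log (6 - 4 * √2) = 2 * log √2 - 2 * log (√2 + 1) := by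
    rw [show 6 - 4 * √2 = (√2 * (√2 + 1)⁻¹) ^ 2 by field_simp; nlinarith, log_pow,
      log_mul (by positivity) (by positivity), log_inv]
    ring
  have hlog₂ : log (2 + √2) = log √2 + log (√2 + 1) := by
    rw [← log_mul (by positivity) (by positivity)]
    congr 1
    nlinarith
  have hlog₃ : log (√2 - 1) = -log (√2 + 1) := by
    rw [← log_inv]
    congr 1
    field_simp
    nlinarith
  simp only [c0Primitive, sub_self, sub_zero, sqrt_zero, sqrt_one, zero_add, add_zero, log_one]
  rw [hhalf, hthreehalves, hlog₁, hlog₂, hlog₃]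
  field_simp
  linear_combination (-6 * log (√2 + 1)) * hq2

lemma continuousOn_c0Primitive : ContinuousOn c0Primitive (Icc 0 1) := by
  have hq1 : 1 < √2 := by nlinarith [sq_sqrt (zero_le_two (α := ℝ)), sqrt_nonneg 2]
  have hpos : ∀ u ∈ Icc (0 : ℝ) 1, √2 + √u - √(1 - u) ≠ 0 := fun u hu ↦ by
    have := sqrt_le_one.2 (by linarith [hu.1] : 1 - u ≤ 1)
    nlinarith [sqrt_nonneg u]
  have hsum : ∀ u ∈ Icc (0 : ℝ) 1, √u + √(1 - u) ≠ 0 := fun u _ ↦ (sqrt_add_sqrt_one_sub_pos u).ne'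
  unfold c0Primitive
  exact ((continuousOn_const.mul (by fun_prop)).add (continuousOn_const.div (by fun_prop) hsum)).sub
    (continuousOn_const.mul (((by fun_prop : ContinuousOn _ _).log hpos).sub
      ((by fun_prop : ContinuousOn _ _).log hsum)))

lemma hasDerivAt_c0Primitive {u : ℝ} (hu : u ∈ Ioo (0 : ℝ) 1) :
    HasDerivAt c0Primitive (2 / 3 * (√u + 2 * √(1 - u)) / (√u + √(1 - u)) ^ 2) u := by
  obtain ⟨hu0, hu1⟩ := hu
  set s := √u with hs
  set r := √(1 - u) with hr
  have hs2 : s ^ 2 = u := sq_sqrt hu0.le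
  have hr2 : r ^ 2 = 1 - u := sq_sqrt (by linarith)
  have hunit : r ^ 2 + s ^ 2 = 1 := by rw [hr2, hs2]; ring
  have hspos : 0 < s := sqrt_pos.2 hu0
  have hrpos : 0 < r := sqrt_pos.2 (by linarith)
  have hq2 : √2 ^ 2 = 2 := sq_sqrt zero_le_two
  have hq1 : 1 < √2 := by nlinarith [sqrt_nonneg 2]
  have hr1 : r < 1 := by nlinarith
  have hds : HasDerivAt (fun u ↦ √u) (1 / (2 * s)) u := hasDerivAt_sqrt hu0.ne'
  have hdr : HasDerivAt (fun u ↦ √(1 - u)) (-(1 / (2 * r))) u := by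
    refine (((hasDerivAt_id' u).const_sub 1).sqrt (by linarith)).congr_deriv ?_
    ring
  have harg : √2 + s - r ≠ 0 := by linarith
  have hlog₁ := ((hds.const_add √2).fun_sub hdr).log harg
  have hlog₂ := (hds.fun_add hdr).log (by positivity : s + r ≠ 0)
  refine ((((hds.const_mul 2).fun_sub hdr).const_mul (2 / 3)).fun_add
    ((hasDerivAt_const u (1 / 3 : ℝ)).div (hds.fun_add hdr) ?_) |>.fun_sub
    ((hlog₁.fun_sub hlog₂).const_mul (√2 / 2))).congr_deriv ?_
  · positivity
  rw [← hs, ← hr]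
  field_simp
  linear_combination (2 * r * √2 - 2 * s * √2 + 4 * r * s + 4 * s ^ 2 - 8 * r ^ 2) * hunit
    + (3 * r ^ 2 - 3 * s ^ 2) * hq2

/-- Closed form of the constant `C₀` for `α = 4`, `m_D = m_I = 1`:
`∫_0^1 u^{-1/2} ₂F₁(1/2, 1, 3, (2u-1)/u)/Γ(3) du
  = 2 + 2^{-3/2} log(6 - 4√2) - 2^{-1/2} log(2 + √2)`. -/
theorem stmt19 :
    ∫ u in Ioo (0 : ℝ) 1, u ^ (-(1 : ℝ)/2) * reg2F1 (1/2) 1 3 ((2 * u - 1) / u)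
      = 2 + (2 : ℝ) ^ (-(3 : ℝ)/2) * Real.log (6 - 4 * Real.sqrt 2)
          - (2 : ℝ) ^ (-(1 : ℝ)/2) * Real.log (2 + Real.sqrt 2) := by
  have hinner : ∀ᵐ u, u ∈ Ioo (0 : ℝ) 1 → u ^ (-(1 : ℝ) / 2) * reg2F1 (1 / 2) 1 3 ((2 * u - 1) / u)
      = 2 / 3 * (√u + 2 * √(1 - u)) / (√u + √(1 - u)) ^ 2 := by
    -- `u = 1/2`, where the inner integral is not covered by `integral_one_sub_div_sqrt`, is null
    filter_upwards [volume.ae_ne (1 / 2)] with u hhalf hu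
    rw [rpow_neg_one_half_mul_reg2F1 hu, setIntegral_Ioo_eq_intervalIntegral _ zero_le_one,
      integral_one_sub_div_sqrt hu.1 (sub_pos.2 hu.2) (by contrapose! hhalf; linarith)]
  have hcont : Continuous fun u : ℝ ↦ 2 / 3 * (√u + 2 * √(1 - u)) / (√u + √(1 - u)) ^ 2 := by
    fun_prop (disch := exact fun u ↦ (pow_pos (sqrt_add_sqrt_one_sub_pos u) 2).ne')
  rw [setIntegral_congr_ae measurableSet_Ioo hinner, setIntegral_Ioo_eq_intervalIntegral _ zero_le_one,
    intervalIntegral.integral_eq_sub_of_hasDerivAt_of_le zero_le_one continuousOn_c0Primitive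
      (fun u hu ↦ hasDerivAt_c0Primitive hu) (hcont.intervalIntegrable 0 1)]
  exact c0Primitive_one_sub_zero
end
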